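/- Let n ≥ 1, let X and A be nonempty finite sets, and for each x ∈ X, a ∈ A let M_a^x be a positive semidefinite complex n×n matrix; set M_✓^x := Σ_{a∈A} M_a^x and assume M_✓^x ≼ 𝟙. Suppose there exist reals e(x) > 0 and a positive definite matrix Q with Q ≼ 𝟙 such that M_✓^x = e(x) • Q for every x ∈ X (fair sampling with positive-definite quantum filter). Let ρ be a density matrix, define ρ_✓ := (√Q) ρ (√Q) / Tr(Q ρ) (the denominator is strictly positive), and define M̄_a^x := e(x)⁻¹ • (Q^{-1/2} M_a^x Q^{-1/2}). Then: (a) Σ_{a∈A} M̄_a^x = 𝟙 for every x; and (b) for every x ∈ X and a ∈ A, Tr(M_a^x ρ) / Tr(M_✓^x ρ) = Tr(M̄_a^x ρ_✓). That is, the post-selected statistics of the lossy device on ρ equal the statistics of a lossless device measuring the filtered state ρ_✓. -/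

import Mathlib

open scoped ComplexOrder

/-- The positive semidefinite square root of a positive semidefinite matrix
(the definition of `Matrix.PosSemidef.sqrt` in Mathlib of December 2024, since removed). -/
noncomputable def Matrix.PosSemidef.sqrt {n : Type*} {𝕜 : Type*} [Fintype n] [DecidableEq n]
    [RCLike 𝕜] {A : Matrix n n 𝕜} (hA : A.PosSemidef) : Matrix n n 𝕜 :=
  hA.1.eigenvectorUnitary.1 * Matrix.diagonal ((↑) ∘ (√·) ∘ hA.1.eigenvalues) *
    (star hA.1.eigenvectorUnitary : Matrix n n 𝕜)

theorem Matrix.PosSemidef.posSemidef_sqrt {n : Type*} {𝕜 : Type*} [Fintype n] [DecidableEq n]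
    [RCLike 𝕜] {A : Matrix n n 𝕜} (hA : A.PosSemidef) : hA.sqrt.PosSemidef := by
  unfold Matrix.PosSemidef.sqrt
  exact (Matrix.PosSemidef.diagonal (fun i => RCLike.ofReal_nonneg.2 (Real.sqrt_nonneg _))).mul_mul_conjTranspose_same _

theorem Matrix.PosSemidef.sqrt_mul_self {n : Type*} {𝕜 : Type*} [Fintype n] [DecidableEq n]
    [RCLike 𝕜] {A : Matrix n n 𝕜} (hA : A.PosSemidef) : hA.sqrt * hA.sqrt = A := by
  have hU : (star hA.1.eigenvectorUnitary : Matrix n n 𝕜) * hA.1.eigenvectorUnitary = 1 :=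
    Unitary.coe_star_mul_self _
  have hD : Matrix.diagonal (((↑) ∘ (√·) ∘ hA.1.eigenvalues) : n → 𝕜) *
      Matrix.diagonal ((↑) ∘ (√·) ∘ hA.1.eigenvalues) =
      Matrix.diagonal (RCLike.ofReal ∘ hA.1.eigenvalues) := by
    rw [Matrix.diagonal_mul_diagonal]; congr 1; funext i
    simp [← RCLike.ofReal_mul, Real.mul_self_sqrt (hA.eigenvalues_nonneg i)]
  conv_rhs => rw [hA.1.spectral_theorem, Unitary.conjStarAlgAut_apply]
  unfold Matrix.PosSemidef.sqrt
  simp only [Matrix.mul_assoc]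
  rw [← Matrix.mul_assoc (star hA.1.eigenvectorUnitary : Matrix n n 𝕜), hU, Matrix.one_mul,
    ← Matrix.mul_assoc _ _ (star hA.1.eigenvectorUnitary : Matrix n n 𝕜), hD]

theorem trace_QR_pos (n : ℕ) (Q : Matrix (Fin n) (Fin n) ℂ) (hQ : Q.PosDef)
    (ρ : Matrix (Fin n) (Fin n) ℂ) (hρ : ρ.PosSemidef) (hρtr : ρ.trace = 1) :
    0 < Matrix.trace (Q * ρ) := by
  set s := hρ.sqrt with hs
  have hherm : s.conjTranspose = s := hρ.posSemidef_sqrt.1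
  have hconj : ∀ k l, s k l = star (s l k) := by
    intro k l
    conv_lhs => rw [← hherm]
    rfl
  have hmul : s * s = ρ := hρ.sqrt_mul_self
  have htr : Matrix.trace (Q * ρ) = Matrix.trace (s * Q * s) := by
    rw [← hmul, ← Matrix.mul_assoc, Matrix.trace_mul_cycle]
  have hdiag : ∀ i, (s * Q * s) i i
      = dotProduct (star (fun k => s k i)) (Q.mulVec (fun k => s k i)) := by
    intro i
    simp only [Matrix.mul_apply, dotProduct, Matrix.mulVec, dotProduct,
      Finset.sum_mul, Finset.mul_sum]
    rw [Finset.sum_comm]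
    refine Finset.sum_congr rfl fun j _ => Finset.sum_congr rfl fun k _ => ?_
    rw [hconj i j]
    simp [mul_comm, mul_assoc, mul_left_comm]
  have hnonneg : ∀ i, 0 ≤ (s * Q * s) i i := fun i => by
    rw [hdiag i]; exact hQ.posSemidef.dotProduct_mulVec_nonneg _
  have hsum : Matrix.trace (s * Q * s) = ∑ i, (s * Q * s) i i := rfl
  have hle : 0 ≤ Matrix.trace (Q * ρ) := by
    rw [htr, hsum]; exact Finset.sum_nonneg fun i _ => hnonneg i
  have hne : Matrix.trace (Q * ρ) ≠ 0 := by
    intro h0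
    have hall : ∀ i ∈ Finset.univ, (s * Q * s) i i = 0 := by
      rw [htr, hsum] at h0
      exact (Finset.sum_eq_zero_iff_of_nonneg fun i _ => hnonneg i).1 h0
    have hszero : s = 0 := by
      ext k i
      have h := hall i (Finset.mem_univ i)
      rw [hdiag i] at h
      by_contra hne
      have hv : (fun k => s k i) ≠ 0 := fun hv0 => hne (by simpa using congrFun hv0 k)
      exact (hQ.dotProduct_mulVec_pos hv).ne' h
    rw [← hmul, hszero] at hρtr
    simp at hρtr
  exact lt_of_le_of_ne hle (Ne.symm hne)


/-- Under fair sampling with a positive definite quantum filter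
(`M_✓^x = e(x) • Q`, `e(x) > 0`, `0 ≺ Q ≼ 𝟙`), the post-selected statistics of the lossy device
on a density matrix `ρ` equal the statistics of the lossless device
`M̄_a^x = e(x)⁻¹ • (Q^{-1/2} M_a^x Q^{-1/2})` measuring the filtered state
`ρ_✓ = √Q ρ √Q / Tr(Q ρ)`. -/
theorem fair_sampling_postselected_eq_lossless_on_filtered_state
    (n : ℕ) (hn : 1 ≤ n)
    (X A : Type*) [Fintype X] [Nonempty X] [Fintype A] [Nonempty A]
    (M : X → A → Matrix (Fin n) (Fin n) ℂ)
    (hMpsd : ∀ x a, (M x a).PosSemidef)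
    (hMle : ∀ x, ((1 : Matrix (Fin n) (Fin n) ℂ) - ∑ a, M x a).PosSemidef)
    (e : X → ℝ) (he : ∀ x, 0 < e x)
    (Q : Matrix (Fin n) (Fin n) ℂ) (hQ : Q.PosDef)
    (hQle : ((1 : Matrix (Fin n) (Fin n) ℂ) - Q).PosSemidef)
    (hfac : ∀ x, ∑ a, M x a = (e x : ℂ) • Q)
    (ρ : Matrix (Fin n) (Fin n) ℂ) (hρ : ρ.PosSemidef) (hρtr : ρ.trace = 1) :
    0 < (Matrix.trace (Q * ρ)).re ∧
    (∀ x, ∑ a, (e x : ℂ)⁻¹ • ((hQ.posSemidef.sqrt)⁻¹ * M x a * (hQ.posSemidef.sqrt)⁻¹) =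
      (1 : Matrix (Fin n) (Fin n) ℂ)) ∧
    ∀ x a,
      Matrix.trace (M x a * ρ) / Matrix.trace ((∑ b, M x b) * ρ) =
        Matrix.trace
          (((e x : ℂ)⁻¹ • ((hQ.posSemidef.sqrt)⁻¹ * M x a * (hQ.posSemidef.sqrt)⁻¹)) *
            ((Matrix.trace (Q * ρ))⁻¹ •
              (hQ.posSemidef.sqrt * ρ * hQ.posSemidef.sqrt))) := by
  have htpos : 0 < Matrix.trace (Q * ρ) := trace_QR_pos n Q hQ ρ hρ hρtr
  set t := Matrix.trace (Q * ρ) with ht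
  set s := hQ.posSemidef.sqrt with hsdef
  have hssQ : s * s = Q := hQ.posSemidef.sqrt_mul_self
  have hdet : IsUnit s.det := by
    have : s.det * s.det = Q.det := by rw [← Matrix.det_mul, hssQ]
    have hQdet : Q.det ≠ 0 := hQ.det_pos.ne'
    exact isUnit_iff_ne_zero.2 fun h => hQdet (by rw [← this, h, mul_zero])
  have hinv_mul : s⁻¹ * s = 1 := Matrix.nonsing_inv_mul s hdet
  have hmul_inv : s * s⁻¹ = 1 := Matrix.mul_nonsing_inv s hdet
  have hene : ∀ x, (e x : ℂ) ≠ 0 := fun x => by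
    exact_mod_cast (Complex.ofReal_ne_zero.2 (he x).ne')
  refine ⟨(Complex.lt_def.1 htpos).1, ?_, ?_⟩
  · intro x
    rw [← Finset.smul_sum]
    have : ∑ a, s⁻¹ * M x a * s⁻¹ = s⁻¹ * (∑ a, M x a) * s⁻¹ := by
      simp [Finset.sum_mul, Finset.mul_sum]
    rw [this, hfac x]
    rw [Matrix.mul_smul, Matrix.smul_mul, smul_smul, inv_mul_cancel₀ (hene x), one_smul,
      ← hssQ, ← Matrix.mul_assoc, Matrix.mul_assoc (s⁻¹ * s), hinv_mul, hmul_inv]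
    simp
  · intro x a
    have hden : Matrix.trace ((∑ b, M x b) * ρ) = (e x : ℂ) * t := by
      rw [hfac x, Matrix.smul_mul, Matrix.trace_smul, smul_eq_mul]
    have hcyc : Matrix.trace (s⁻¹ * M x a * s⁻¹ * (s * ρ * s)) = Matrix.trace (M x a * ρ) := by
      have h1 : s⁻¹ * M x a * s⁻¹ * (s * ρ * s) = s⁻¹ * (M x a * ρ) * s := by
        simp only [Matrix.mul_assoc]
        rw [show s⁻¹ * (s * (ρ * s)) = (s⁻¹ * s) * (ρ * s) from (Matrix.mul_assoc _ _ _).symm,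
          hinv_mul, Matrix.one_mul]
      rw [h1, Matrix.trace_mul_cycle, ← Matrix.mul_assoc, hmul_inv, Matrix.one_mul]
    rw [hden]
    rw [Matrix.smul_mul, Matrix.mul_smul, Matrix.trace_smul, Matrix.trace_smul, hcyc,
      smul_eq_mul, smul_eq_mul]
    rw [div_eq_iff (mul_ne_zero (hene x) htpos.ne')]
    rw [show ((e x : ℂ))⁻¹ * (t⁻¹ * (M x a * ρ).trace) * ((e x : ℂ) * t)
        = (M x a * ρ).trace * (((e x : ℂ))⁻¹ * (e x : ℂ)) * (t⁻¹ * t) by ring,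
      inv_mul_cancel₀ (hene x), inv_mul_cancel₀ htpos.ne', mul_one, mul_one]
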